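/- Let μ be a centred probability measure on ℝ with no atoms and let F : ℝ × ℝ → ℝ be upper semicontinuous and strictly supermodular such that for every w the function s ↦ F(w,s) is strictly increasing on all of ℝ. Assume w ↦ F(w, β_μ(w)) is μ-integrable. Then for every Rogers-admissible probability measure π with marginal μ such that F is π-integrable, one has ∫ F dπ ≤ ∫ F(w, β_μ(w)) dμ(w). -/

import Mathlib

open MeasureTheory Set

noncomputable section

/-- The set `M = {(x,y) : y ≥ 0 and y ≥ x}`. -/
def MSet : Set (ℝ × ℝ) := {p : ℝ × ℝ | 0 ≤ p.2 ∧ p.1 ≤ p.2}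

/-- A probability measure on `ℝ` is centred if the identity is integrable with mean `0`. -/
def Centred (μ : Measure ℝ) : Prop :=
  Integrable (fun x : ℝ => x) μ ∧ (∫ x, x ∂μ) = 0

/-- Strict supermodularity of a bivariate function. -/
def StrictlySupermodular (F : ℝ × ℝ → ℝ) : Prop :=
  ∀ w₁ w₂ s₁ s₂ : ℝ, w₁ < w₂ → s₁ < s₂ →
    F (w₁, s₂) + F (w₂, s₁) < F (w₁, s₁) + F (w₂, s₂)

/-- `F` is serrated with ridge `a : ℝ → EReal`: for every `w`, `s ↦ F (w, s)` is
strictly increasing on `{s | s < a w}` and strictly decreasing on `{s | a w < s}`. -/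
def SerratedWithRidge (F : ℝ × ℝ → ℝ) (a : ℝ → EReal) : Prop :=
  ∀ w : ℝ,
    StrictMonoOn (fun s : ℝ => F (w, s)) {s : ℝ | (s : EReal) < a w} ∧
    StrictAntiOn (fun s : ℝ => F (w, s)) {s : ℝ | a w < (s : EReal)}

/-- Rogers' conditions for `π` to be the joint law of the terminal value and the
running maximum of a UI martingale started at `0` with terminal law `μ`. -/
def RogersAdmissible (μ : Measure ℝ) (π : Measure (ℝ × ℝ)) : Prop :=
  Integrable (fun p : ℝ × ℝ => p.1) π ∧
  (∫ p : ℝ × ℝ, p.1 ∂π) = 0 ∧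
  π MSetᶜ = 0 ∧
  (∀ s : ℝ, 0 ≤ s →
    s * (π {p : ℝ × ℝ | s ≤ p.2}).toReal ≤ ∫ p in {p : ℝ × ℝ | s ≤ p.2}, p.1 ∂π) ∧
  Measure.map Prod.fst π = μ

/-- The barycenter function of `μ`. -/
def barycenter (μ : Measure ℝ) (w : ℝ) : ℝ :=
  if 0 < (μ (Ici w)).toReal then (∫ x in Ici w, x ∂μ) / (μ (Ici w)).toReal else w

/-- `g(w) = min(β_μ(w), max(a(w), 0, w))`, the max computed in `EReal`. -/
def ridgeG (μ : Measure ℝ) (a : ℝ → EReal) (w : ℝ) : ℝ :=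
  (min ((barycenter μ w : ℝ) : EReal) (max (a w) (max (0 : EReal) ((w : ℝ) : EReal)))).toReal

/-!
Let `b` be the generalised inverse of the barycenter function `β = β_μ`. For `0 < s ≤ t`, the
supremum `incrAlong F b s t` of the sums `∑ᵢ (F (b xᵢ, xᵢ₊₁) - F (b xᵢ, xᵢ))` over partitions of
`[s, t]` plays the role of `∫ₛᵗ ∂₂F (b u, u) du`. Supermodularity makes it additive in the
interval, so it is the increment of a nondecreasing right-continuous function `Φ`, and it also
gives the pointwise bound `F (x, y) - F (x, β x) ≤ Φ y - Φ (β x)` for `y ≥ 0`, because `b ≤ x`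
below `β x` and `b ≥ x` above it.

Rogers' condition `s π {y ≥ s} ≤ ∫_{y ≥ s} x dπ`, compared with `E (X - w)⁺ = (β w - w) μ [w, ∞)`,
shows that under `π` the maximum `y` is stochastically dominated by `β x`. Integrating
`Φ y - Φ (β x)` against `π` through Fubini with the Stieltjes measure of `Φ` therefore gives a
nonpositive number, which bounds `∫ F dπ - ∫ F (w, β w) dμ`.
-/

def Supermodular (F : ℝ × ℝ → ℝ) : Prop :=
  ∀ ⦃w₁ w₂ s₁ s₂ : ℝ⦄, w₁ ≤ w₂ → s₁ ≤ s₂ →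
    F (w₁, s₂) + F (w₂, s₁) ≤ F (w₁, s₁) + F (w₂, s₂)

lemma StrictlySupermodular.supermodular {F : ℝ × ℝ → ℝ} (hF : StrictlySupermodular F) :
    Supermodular F := by
  intro w₁ w₂ s₁ s₂ hw hs
  rcases hw.eq_or_lt with rfl | hw
  · rw [add_comm]
  rcases hs.eq_or_lt with rfl | hs
  · rw [add_comm]
  exact (hF w₁ w₂ s₁ s₂ hw hs).le

lemma Supermodular.sub_le_sub {F : ℝ × ℝ → ℝ} (hF : Supermodular F) {w₁ w₂ s₁ s₂ : ℝ}
    (hw : w₁ ≤ w₂) (hs : s₁ ≤ s₂) : F (w₁, s₂) - F (w₁, s₁) ≤ F (w₂, s₂) - F (w₂, s₁) := by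
  linarith [hF hw hs]

lemma Monotone.continuousWithinAt_Ici {f : ℝ → ℝ} (hf : Monotone f) {t : ℝ}
    (h : UpperSemicontinuousWithinAt f (Ici t) t) : ContinuousWithinAt f (Ici t) t :=
  continuousWithinAt_iff_lower_upperSemicontinuousWithinAt.2
    ⟨fun _ hy => eventually_nhdsWithin_of_forall fun _ hs => hy.trans_le (hf hs), h⟩

lemma ContinuousWithinAt.le_of_forall_Ioo {u v : ℝ → ℝ} {a c : ℝ} (hac : a < c)
    (hu : ContinuousWithinAt u (Ici a) a) (hv : ContinuousWithinAt v (Ici a) a)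
    (h : ∀ ε ∈ Ioo a c, u ε ≤ v ε) : u a ≤ v a :=
  le_of_tendsto_of_tendsto (hu.mono_left (nhdsWithin_mono a Ioi_subset_Ici_self))
    (hv.mono_left (nhdsWithin_mono a Ioi_subset_Ici_self))
    (Filter.eventually_of_mem (Ioo_mem_nhdsGT hac) h)

section SumsAlong

variable {F : ℝ × ℝ → ℝ} {b : ℝ → ℝ}

def sumAlong (F : ℝ × ℝ → ℝ) (b : ℝ → ℝ) : List ℝ → ℝ
  | x :: y :: l => F (b x, y) - F (b x, x) + sumAlong F b (y :: l)
  | _ => 0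

def sumsAlong (F : ℝ × ℝ → ℝ) (b : ℝ → ℝ) (s t : ℝ) : Set ℝ :=
  {r | ∃ l : List ℝ, (s :: l ++ [t]).IsChain (· ≤ ·) ∧ r = sumAlong F b (s :: l ++ [t])}

def incrAlong (F : ℝ × ℝ → ℝ) (b : ℝ → ℝ) (s t : ℝ) : ℝ := sSup (sumsAlong F b s t)

lemma mem_Icc_of_isChain {s t y : ℝ} {l : List ℝ} (h : (s :: l ++ [t]).IsChain (· ≤ ·))
    (hy : y ∈ s :: l ++ [t]) : y ∈ Icc s t := by
  have h' := h.pairwise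
  simp only [List.cons_append, List.pairwise_cons, List.pairwise_append] at h'
  simp only [List.cons_append, List.mem_cons, List.mem_append] at hy
  grind

lemma sumAlong_le (hF : Supermodular F) {t X : ℝ} :
    ∀ {s : ℝ} {l : List ℝ}, (s :: l ++ [t]).IsChain (· ≤ ·) → (∀ y ∈ Icc s t, b y ≤ X) →
      sumAlong F b (s :: l ++ [t]) ≤ F (X, t) - F (X, s)
  | s, [], h, hX => by
    have hst : s ≤ t := by simpa using h
    simpa [sumAlong] using hF.sub_le_sub (hX s ⟨le_rfl, hst⟩) hst
  | s, y :: l, h, hX => by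
    simp only [List.cons_append, List.isChain_cons_cons] at h
    have hyt := (mem_Icc_of_isChain h.2 List.mem_cons_self).2
    have hrest := sumAlong_le hF h.2 fun z hz => hX z ⟨h.1.trans hz.1, hz.2⟩
    have hfirst := hF.sub_le_sub (hX s ⟨le_rfl, h.1.trans hyt⟩) h.1
    simp only [List.cons_append, sumAlong] at hrest ⊢
    linarith

lemma sumAlong_append (l m : List ℝ) (y : ℝ) :
    sumAlong F b (l ++ y :: m) = sumAlong F b (l ++ [y]) + sumAlong F b (y :: m) := by
  induction l with
  | nil => simp [sumAlong]
  | cons x l ih =>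
    cases l with
    | nil => simp [sumAlong]
    | cons z l => simp only [List.cons_append, sumAlong] at ih ⊢; linarith

lemma sumAlong_pair_mem_sumsAlong {s t : ℝ} (hst : s ≤ t) :
    sumAlong F b [s, t] ∈ sumsAlong F b s t :=
  ⟨[], by simpa using hst, rfl⟩

lemma sumsAlong_nonempty {s t : ℝ} (hst : s ≤ t) : (sumsAlong F b s t).Nonempty :=
  ⟨_, sumAlong_pair_mem_sumsAlong hst⟩

lemma add_mem_sumsAlong {s c t r₁ r₂ : ℝ} (h₁ : r₁ ∈ sumsAlong F b s c)
    (h₂ : r₂ ∈ sumsAlong F b c t) : r₁ + r₂ ∈ sumsAlong F b s t := by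
  obtain ⟨l₁, hl₁, rfl⟩ := h₁
  obtain ⟨l₂, hl₂, rfl⟩ := h₂
  refine ⟨l₁ ++ c :: l₂, ?_, ?_⟩
  · rw [List.cons_append, List.append_assoc, List.cons_append, List.isChain_cons_split]
    exact ⟨hl₁, hl₂⟩
  · have := sumAlong_append (F := F) (b := b) (s :: l₁) (l₂ ++ [t]) c
    simp only [List.cons_append, List.append_assoc] at this ⊢
    exact this.symm

variable (hF : Supermodular F) (hb : MonotoneOn b (Ioi 0))
include hF hb

/-- Inserting the point `c` into a partition can only increase its sum, since `b` is monotone. -/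
lemma exists_sumsAlong_le_add {c t : ℝ} (hct : c ≤ t) :
    ∀ {s : ℝ} {l : List ℝ}, 0 < s → s ≤ c → (s :: l ++ [t]).IsChain (· ≤ ·) →
      ∃ r₁ ∈ sumsAlong F b s c, ∃ r₂ ∈ sumsAlong F b c t, sumAlong F b (s :: l ++ [t]) ≤ r₁ + r₂
  | s, [], hs, hsc, _ => by
    refine ⟨_, sumAlong_pair_mem_sumsAlong hsc, _, sumAlong_pair_mem_sumsAlong hct, ?_⟩
    have := hF.sub_le_sub (hb hs (hs.trans_le hsc) hsc) hct
    simp only [List.cons_append, List.nil_append, sumAlong]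
    linarith
  | s, y :: l, hs, hsc, h => by
    simp only [List.cons_append, List.isChain_cons_cons] at h
    rcases le_or_gt y c with hyc | hcy
    · obtain ⟨_, ⟨m, hm, rfl⟩, r₂, h₂, hle⟩ :=
        exists_sumsAlong_le_add hct (hs.trans_le h.1) hyc h.2
      refine ⟨sumAlong F b (s :: (y :: m) ++ [c]), ⟨y :: m, ?_, rfl⟩, r₂, h₂, ?_⟩
      · simpa using ⟨h.1, hm⟩
      · simp only [List.cons_append, sumAlong] at hle ⊢
        linarith
    · refine ⟨_, sumAlong_pair_mem_sumsAlong hsc, sumAlong F b (c :: (y :: l) ++ [t]),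
        ⟨y :: l, ?_, rfl⟩, ?_⟩
      · simpa using ⟨hcy.le, h.2⟩
      · have := hF.sub_le_sub (hb hs (hs.trans_le hsc) hsc) hcy.le
        simp only [List.cons_append, sumAlong]
        linarith

lemma bddAbove_sumsAlong {s t : ℝ} (hs : 0 < s) (hst : s ≤ t) : BddAbove (sumsAlong F b s t) :=
  ⟨F (b t, t) - F (b t, s), by
    rintro r ⟨l, hl, rfl⟩
    exact sumAlong_le hF hl fun y hy => hb (hs.trans_le hy.1) (hs.trans_le hst) hy.2⟩

lemma incrAlong_add {s c t : ℝ} (hs : 0 < s) (hsc : s ≤ c) (hct : c ≤ t) :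
    incrAlong F b s t = incrAlong F b s c + incrAlong F b c t := by
  have hbdd := bddAbove_sumsAlong hF hb hs (hsc.trans hct)
  rw [incrAlong, incrAlong, incrAlong, ← csSup_add (sumsAlong_nonempty hsc)
    (bddAbove_sumsAlong hF hb hs hsc) (sumsAlong_nonempty hct)
    (bddAbove_sumsAlong hF hb (hs.trans_le hsc) hct)]
  refine le_antisymm (csSup_le (sumsAlong_nonempty (hsc.trans hct)) ?_)
    (csSup_le_csSup hbdd ((sumsAlong_nonempty hsc).add (sumsAlong_nonempty hct)) ?_)
  · rintro r ⟨l, hl, rfl⟩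
    obtain ⟨r₁, h₁, r₂, h₂, hle⟩ := exists_sumsAlong_le_add hF hb hct hs hsc hl
    exact le_csSup_of_le (BddAbove.add (bddAbove_sumsAlong hF hb hs hsc)
      (bddAbove_sumsAlong hF hb (hs.trans_le hsc) hct)) (Set.add_mem_add h₁ h₂) hle
  · rintro _ ⟨r₁, h₁, r₂, h₂, rfl⟩
    exact add_mem_sumsAlong h₁ h₂

omit hb in
lemma incrAlong_le {s t X : ℝ} (hst : s ≤ t) (hX : ∀ y ∈ Icc s t, b y ≤ X) :
    incrAlong F b s t ≤ F (X, t) - F (X, s) :=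
  csSup_le (sumsAlong_nonempty hst) fun _ ⟨_, hl, hr⟩ => hr ▸ sumAlong_le hF hl hX

lemma sub_le_incrAlong {s t : ℝ} (hs : 0 < s) (hst : s ≤ t) :
    F (b s, t) - F (b s, s) ≤ incrAlong F b s t := by
  have h := le_csSup (bddAbove_sumsAlong hF hb hs hst) (sumAlong_pair_mem_sumsAlong hst)
  simp only [sumAlong, add_zero] at h
  exact h

lemma incrAlong_self {t : ℝ} (ht : 0 < t) :
    incrAlong F b t t = 0 :=
  le_antisymm
    (by simpa using incrAlong_le hF (X := b t) le_rfl fun y hy => by rw [le_antisymm hy.2 hy.1])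
    (by simpa using sub_le_incrAlong hF hb ht le_rfl)

lemma incrAlong_nonneg (hmono : ∀ w, Monotone fun s => F (w, s)) {s t : ℝ} (hs : 0 < s)
    (hst : s ≤ t) : 0 ≤ incrAlong F b s t :=
  (sub_nonneg.2 (hmono (b s) hst)).trans (sub_le_incrAlong hF hb hs hst)

end SumsAlong

section Potential

variable {F : ℝ × ℝ → ℝ} {b : ℝ → ℝ}

def incrAlongFromZero (F : ℝ × ℝ → ℝ) (b : ℝ → ℝ) : ℝ :=
  sSup ((fun ε => incrAlong F b ε 1) '' Ioc 0 1)

/-- Normalised by `potential F b 1 = 0`; on `(-∞, 0]` it takes its right limit at `0`, the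
infimum of its values on `(0, 1]`. -/
def potential (F : ℝ × ℝ → ℝ) (b : ℝ → ℝ) (t : ℝ) : ℝ :=
  if 1 ≤ t then incrAlong F b 1 t
  else if 0 < t then -incrAlong F b t 1
  else -incrAlongFromZero F b

lemma potential_of_nonpos {t : ℝ} (ht : t ≤ 0) : potential F b t = -incrAlongFromZero F b := by
  rw [potential, if_neg (by linarith), if_neg (by linarith)]

variable (hF : Supermodular F) (hb : MonotoneOn b (Ioi 0))
include hF hb

lemma potential_sub_potential {s t : ℝ} (hs : 0 < s) (hst : s ≤ t) :
    potential F b t - potential F b s = incrAlong F b s t := by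
  unfold potential
  by_cases h1s : 1 ≤ s
  · rw [if_pos (h1s.trans hst), if_pos h1s, incrAlong_add hF hb one_pos h1s hst]
    ring
  by_cases h1t : 1 ≤ t
  · rw [if_pos h1t, if_neg h1s, if_pos hs, incrAlong_add hF hb hs (not_le.1 h1s).le h1t]
    ring
  · rw [if_neg h1t, if_pos (hs.trans_le hst), if_neg h1s, if_pos hs,
      incrAlong_add hF hb hs hst (not_le.1 h1t).le]
    ring

lemma potential_of_pos_of_le_one {t : ℝ} (ht : 0 < t) (ht1 : t ≤ 1) :
    potential F b t = -incrAlong F b t 1 := by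
  rcases ht1.eq_or_lt with rfl | ht1
  · rw [potential, if_pos le_rfl, incrAlong_self hF hb one_pos, neg_zero]
  · rw [potential, if_neg (not_le.2 ht1), if_pos ht]

variable (hmono : ∀ w, Monotone fun s => F (w, s))
include hmono

lemma bddAbove_incrAlong_Ioc : BddAbove ((fun ε => incrAlong F b ε 1) '' Ioc 0 1) := by
  refine ⟨F (b 1, 1) - F (b 1, 0), ?_⟩
  rintro _ ⟨ε, hε, rfl⟩
  have := incrAlong_le hF hε.2 fun y hy => hb (hε.1.trans_le hy.1) (mem_Ioi.2 one_pos) hy.2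
  linarith [hmono (b 1) hε.1.le]

lemma neg_incrAlongFromZero_le_potential {t : ℝ} (ht : 0 < t) :
    -incrAlongFromZero F b ≤ potential F b t := by
  set u := min t 1
  have hu : 0 < u := lt_min ht one_pos
  have h₁ : incrAlong F b u 1 ≤ incrAlongFromZero F b :=
    le_csSup (bddAbove_incrAlong_Ioc hF hb hmono) ⟨u, ⟨hu, min_le_right t 1⟩, rfl⟩
  have h₂ := potential_sub_potential hF hb hu (min_le_left t 1)
  have h₃ := incrAlong_nonneg hF hb hmono hu (min_le_left t 1)
  rw [potential_of_pos_of_le_one hF hb hu (min_le_right t 1)] at h₂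
  linarith

lemma monotone_potential : Monotone (potential F b) := by
  intro s t hst
  rcases le_or_gt s 0 with hs | hs
  · rw [potential_of_nonpos hs]
    rcases le_or_gt t 0 with ht | ht
    · rw [potential_of_nonpos ht]
    · exact neg_incrAlongFromZero_le_potential hF hb hmono ht
  · linarith [potential_sub_potential hF hb hs hst, incrAlong_nonneg hF hb hmono hs hst]

lemma continuousWithinAt_potential_zero : ContinuousWithinAt (potential F b) (Ici 0) 0 := by
  refine (monotone_potential hF hb hmono).continuousWithinAt_Ici fun a ha => ?_
  dsimp only at ha ⊢
  rw [potential_of_nonpos le_rfl, neg_lt] at ha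
  obtain ⟨_, ⟨ε, hε, rfl⟩, hlt⟩ := exists_lt_of_lt_csSup
    ((nonempty_Ioc.2 one_pos).image _) ha
  filter_upwards [Ico_mem_nhdsGE hε.1] with u hu
  rcases hu.1.eq_or_lt with rfl | hu0
  · rw [potential_of_nonpos le_rfl]
    linarith
  · rw [potential_of_pos_of_le_one hF hb hu0 (hu.2.le.trans hε.2),
      incrAlong_add hF hb hu0 hu.2.le hε.2]
    linarith [incrAlong_nonneg hF hb hmono hu0 hu.2.le]

variable (hFrc : ∀ w t, ContinuousWithinAt (fun s => F (w, s)) (Ici t) t)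
include hFrc

lemma continuousWithinAt_potential_of_pos {t : ℝ} (ht : 0 < t) :
    ContinuousWithinAt (potential F b) (Ici t) t := by
  set X := b (t + 1)
  have hup : ContinuousWithinAt (fun u => potential F b t + (F (X, u) - F (X, t))) (Ici t) t :=
    continuousWithinAt_const.add ((hFrc X t).sub continuousWithinAt_const)
  refine tendsto_of_tendsto_of_tendsto_of_le_of_le' tendsto_const_nhds (by simpa using hup.tendsto)
    (eventually_nhdsWithin_of_forall fun u hu => monotone_potential hF hb hmono hu) ?_
  filter_upwards [Icc_mem_nhdsGE (lt_add_one t), self_mem_nhdsWithin] with u hu htu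
  have := incrAlong_le hF htu fun y hy =>
    hb (ht.trans_le hy.1) (mem_Ioi.2 (by linarith)) (hy.2.trans hu.2)
  linarith [potential_sub_potential hF hb ht htu]

lemma continuousWithinAt_potential (t : ℝ) : ContinuousWithinAt (potential F b) (Ici t) t := by
  rcases lt_trichotomy t 0 with ht | rfl | ht
  · refine continuousWithinAt_const.congr_of_eventuallyEq ?_ (potential_of_nonpos ht.le)
    filter_upwards [nhdsWithin_le_nhds (Iio_mem_nhds ht)] with u hu
    exact potential_of_nonpos (le_of_lt hu)
  · exact continuousWithinAt_potential_zero hF hb hmono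
  · exact continuousWithinAt_potential_of_pos hF hb hmono hFrc ht

lemma sub_le_potential_sub {x t₁ t₂ : ℝ} (ht₁ : 0 ≤ t₁) (h₁₂ : t₁ < t₂)
    (hx : ∀ ε ∈ Ioo t₁ t₂, x ≤ b ε) :
    F (x, t₂) - F (x, t₁) ≤ potential F b t₂ - potential F b t₁ := by
  refine ContinuousWithinAt.le_of_forall_Ioo h₁₂
    (u := fun ε => F (x, t₂) - F (x, ε)) (v := fun ε => potential F b t₂ - potential F b ε)
    (continuousWithinAt_const.sub (hFrc x t₁))
    (continuousWithinAt_const.sub (continuousWithinAt_potential hF hb hmono hFrc t₁))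
    fun ε hε => ?_
  have hε₀ : 0 < ε := ht₁.trans_lt hε.1
  calc F (x, t₂) - F (x, ε) ≤ F (b ε, t₂) - F (b ε, ε) := hF.sub_le_sub (hx ε hε) hε.2.le
    _ ≤ incrAlong F b ε t₂ := sub_le_incrAlong hF hb hε₀ hε.2.le
    _ = potential F b t₂ - potential F b ε := (potential_sub_potential hF hb hε₀ hε.2.le).symm

lemma potential_sub_le_sub {x t₁ t₂ : ℝ} (ht₁ : 0 ≤ t₁) (h₁₂ : t₁ < t₂)
    (hx : ∀ y ∈ Ioc t₁ t₂, b y ≤ x) :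
    potential F b t₂ - potential F b t₁ ≤ F (x, t₂) - F (x, t₁) := by
  refine ContinuousWithinAt.le_of_forall_Ioo h₁₂
    (u := fun ε => potential F b t₂ - potential F b ε) (v := fun ε => F (x, t₂) - F (x, ε))
    (continuousWithinAt_const.sub (continuousWithinAt_potential hF hb hmono hFrc t₁))
    (continuousWithinAt_const.sub (hFrc x t₁)) fun ε hε => ?_
  have hε₀ : 0 < ε := ht₁.trans_lt hε.1
  rw [potential_sub_potential hF hb hε₀ hε.2.le]
  exact incrAlong_le hF hε.2.le fun y hy => hx y ⟨hε.1.trans_le hy.1, hy.2⟩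

end Potential

lemma setIntegral_le_of_le_const_real {α : Type*} [MeasurableSpace α] {μ : Measure α}
    {f : α → ℝ} {s : Set α} {c : ℝ} (hs : MeasurableSet s) (hμs : μ s ≠ ⊤)
    (hf : ∀ x ∈ s, f x ≤ c) (hfint : IntegrableOn f s μ) :
    ∫ x in s, f x ∂μ ≤ c * μ.real s := by
  have := setIntegral_ge_of_const_le_real hs hμs (f := fun x => -f x) (c := -c)
    (fun x hx => neg_le_neg (hf x hx)) hfint.neg
  rw [integral_neg] at this
  linarith

section Barycenter

variable {μ : Measure ℝ} [IsFiniteMeasure μ]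

lemma setIntegral_Ici_eq_barycenter_mul (w : ℝ) :
    ∫ x in Ici w, x ∂μ = barycenter μ w * μ.real (Ici w) := by
  rw [barycenter]
  split_ifs with h
  · exact (div_mul_cancel₀ _ h.ne').symm
  · have h0 : μ (Ici w) = 0 := by
      by_contra hne
      exact h (ENNReal.toReal_pos hne (measure_ne_top _ _))
    simp [Measure.restrict_eq_zero.2 h0, measureReal_def, h0]

lemma le_barycenter (hμ₁ : Integrable (fun x => x) μ) (w : ℝ) : w ≤ barycenter μ w := by
  rw [barycenter]
  split_ifs with h
  · rw [le_div_iff₀ h]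
    exact setIntegral_ge_of_const_le_real measurableSet_Ici (measure_ne_top _ _) (fun _ hx => hx)
      hμ₁.integrableOn
  · exact le_rfl

lemma monotone_barycenter (hμ₁ : Integrable (fun x => x) μ) : Monotone (barycenter μ) := by
  intro w₁ w₂ h
  have key : ∫ x in Ici w₁, x ∂μ ≤ barycenter μ w₂ * μ.real (Ici w₁) := by
    have hdisj : Disjoint (Ico w₁ w₂) (Ici w₂) :=
      disjoint_left.2 fun _ hx hx' => hx.2.not_ge hx'
    rw [← Ico_union_Ici_eq_Ici h, setIntegral_union hdisj measurableSet_Ici hμ₁.integrableOn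
      hμ₁.integrableOn, measureReal_union hdisj measurableSet_Ici, mul_add,
      setIntegral_Ici_eq_barycenter_mul]
    gcongr
    exact setIntegral_le_of_le_const_real measurableSet_Ico (measure_ne_top _ _)
      (fun x hx => hx.2.le.trans (le_barycenter hμ₁ w₂)) hμ₁.integrableOn
  rw [barycenter]
  split_ifs with hpos
  · rwa [div_le_iff₀ hpos]
  · exact h.trans (le_barycenter hμ₁ w₂)

lemma integral_max_sub_eq (hμ₁ : Integrable (fun x => x) μ) (w : ℝ) :
    ∫ x, max (x - w) 0 ∂μ = (barycenter μ w - w) * μ.real (Ici w) := by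
  rw [← setIntegral_eq_integral_of_forall_compl_eq_zero (s := Ici w) fun x hx =>
      max_eq_right (sub_nonpos.2 (not_le.1 hx).le),
    setIntegral_congr_fun measurableSet_Ici fun x hx => max_eq_left (sub_nonneg.2 hx),
    integral_sub hμ₁.integrableOn (integrable_const w), setIntegral_const,
    setIntegral_Ici_eq_barycenter_mul, smul_eq_mul]
  ring

variable [NeZero μ] (hμ : Centred μ)
include hμ

lemma measure_Ici_zero_ne_zero : μ (Ici 0) ≠ 0 := by
  intro h0
  have hneg : 0 ≤ᵐ[μ] fun x => -x :=
    (measure_eq_zero_iff_ae_notMem.1 h0).mono fun _ hx => neg_nonneg.2 (not_le.1 hx).le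
  have hIio : μ (Iio 0) ≠ 0 := by
    rw [← compl_Ici, measure_compl measurableSet_Ici (measure_ne_top _ _), h0, tsub_zero]
    exact NeZero.ne _
  have hsupp : μ (Iio 0) ≤ μ (Function.support fun x : ℝ => -x) :=
    measure_mono fun _ hx => neg_ne_zero.2 (ne_of_lt hx)
  have := (integral_pos_iff_support_of_nonneg_ae hneg hμ.1.neg).2
    ((pos_iff_ne_zero.2 hIio).trans_le hsupp)
  rw [integral_neg, hμ.2, neg_zero] at this
  exact lt_irrefl _ this

lemma barycenter_nonneg (x : ℝ) : 0 ≤ barycenter μ x := by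
  rcases le_or_gt x 0 with hx | hx
  · have hm : 0 < μ.real (Ici x) := ENNReal.toReal_pos
      (fun h => measure_Ici_zero_ne_zero hμ (measure_mono_null (Ici_subset_Ici.2 hx) h))
      (measure_ne_top _ _)
    refine nonneg_of_mul_nonneg_left ?_ hm
    rw [← setIntegral_Ici_eq_barycenter_mul]
    have hsplit := integral_add_compl (measurableSet_Ici (a := x)) hμ.1
    have hcompl := setIntegral_le_of_le_const_real (f := fun y => y) (c := x)
      measurableSet_Ici.compl (measure_ne_top μ _) (fun y hy => (not_le.1 hy).le) hμ.1.integrableOn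
    have := mul_nonpos_of_nonpos_of_nonneg hx (measureReal_nonneg (μ := μ) (s := (Ici x)ᶜ))
    linarith [hμ.2]
  · exact hx.le.trans (le_barycenter hμ.1 x)

lemma exists_barycenter_lt {t : ℝ} (ht : 0 < t) : ∃ x, barycenter μ x < t := by
  set c := μ.real (Ici 0)
  have hc : 0 < c := ENNReal.toReal_pos (measure_Ici_zero_ne_zero hμ) (measure_ne_top _ _)
  have hunion : (⋃ r : ℝ, Ici (-r)) = univ :=
    eq_univ_of_forall fun x => mem_iUnion.2 ⟨-x, by simp⟩
  have htend := tendsto_setIntegral_of_monotone (μ := μ) (f := fun x => x)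
    (fun r : ℝ => measurableSet_Ici) (fun r r' h => Ici_subset_Ici.2 (neg_le_neg h))
    (hunion ▸ hμ.1.integrableOn)
  rw [hunion, setIntegral_univ, hμ.2] at htend
  obtain ⟨r, hr, hr₀⟩ := ((htend.eventually (gt_mem_nhds (mul_pos ht hc))).and
    (Filter.eventually_ge_atTop 0)).exists
  refine ⟨-r, lt_of_mul_lt_mul_right (a := μ.real (Ici (-r))) ?_ measureReal_nonneg⟩
  rw [← setIntegral_Ici_eq_barycenter_mul]
  calc ∫ x in Ici (-r), x ∂μ < t * c := hr
    _ ≤ t * μ.real (Ici (-r)) :=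
      mul_le_mul_of_nonneg_left (measureReal_mono (Ici_subset_Ici.2 (by linarith))) ht.le

end Barycenter

section InvBarycenter

variable {μ : Measure ℝ} [IsFiniteMeasure μ]

def invBarycenter (μ : Measure ℝ) (t : ℝ) : ℝ := sInf {x | t ≤ barycenter μ x}

lemma le_invBarycenter (hμ₁ : Integrable (fun x => x) μ) {x t : ℝ} (h : barycenter μ x < t) :
    x ≤ invBarycenter μ t :=
  le_csInf ⟨t, le_barycenter hμ₁ t⟩ fun _ hy =>
    le_of_not_gt fun hyx => (hy.trans (monotone_barycenter hμ₁ hyx.le)).not_gt h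

variable [NeZero μ] (hμ : Centred μ)
include hμ

lemma bddBelow_barycenter_ge {t : ℝ} (ht : 0 < t) : BddBelow {x | t ≤ barycenter μ x} := by
  obtain ⟨x₀, hx₀⟩ := exists_barycenter_lt hμ ht
  exact ⟨x₀, fun x hx => le_of_not_gt fun hxx₀ =>
    (hx.trans (monotone_barycenter hμ.1 hxx₀.le)).not_gt hx₀⟩

lemma invBarycenter_le {x t : ℝ} (ht : 0 < t) (h : t ≤ barycenter μ x) :
    invBarycenter μ t ≤ x :=
  csInf_le (bddBelow_barycenter_ge hμ ht) h

lemma monotoneOn_invBarycenter : MonotoneOn (invBarycenter μ) (Ioi 0) := fun _ hs _ _ hst =>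
  csInf_le_csInf (bddBelow_barycenter_ge hμ hs) ⟨_, le_barycenter hμ.1 _⟩ fun _ hx => hst.trans hx

lemma sub_le_potential_invBarycenter_sub {F : ℝ × ℝ → ℝ} (hF : Supermodular F)
    (hmono : ∀ w, Monotone fun s => F (w, s))
    (hFrc : ∀ w t, ContinuousWithinAt (fun s => F (w, s)) (Ici t) t) {x s : ℝ} (hs : 0 ≤ s) :
    F (x, s) - F (x, barycenter μ x) ≤
      potential F (invBarycenter μ) s - potential F (invBarycenter μ) (barycenter μ x) := by
  have hb := monotoneOn_invBarycenter hμ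
  rcases lt_trichotomy s (barycenter μ x) with h | h | h
  · have := potential_sub_le_sub hF hb hmono hFrc hs h fun y hy =>
      invBarycenter_le hμ (hs.trans_lt hy.1) hy.2
    linarith
  · rw [h, sub_self, sub_self]
  · exact sub_le_potential_sub hF hb hmono hFrc (barycenter_nonneg hμ x) h fun ε hε =>
      le_invBarycenter hμ.1 hε.1

end InvBarycenter

lemma le_measure_Ici_of_forall_lt {μ : Measure ℝ} [IsFiniteMeasure μ] {a : ENNReal} {c : ℝ}
    (h : ∀ w < c, a ≤ μ (Ici w)) : a ≤ μ (Ici c) := by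
  have htend := tendsto_measure_biInter_gt (μ := μ) (s := fun r => Ici (c - r)) (a := 0)
    (fun _ _ => measurableSet_Ici.nullMeasurableSet)
    (fun _ _ _ hij => Ici_subset_Ici.2 (by linarith)) ⟨1, one_pos, measure_ne_top _ _⟩
  have hinter : ⋂ r > (0 : ℝ), Ici (c - r) = Ici c := by
    ext x
    simp only [mem_iInter, mem_Ici, sub_le_iff_le_add]
    exact ⟨le_of_forall_pos_le_add, fun hx r hr => by linarith⟩
  rw [hinter] at htend
  exact ge_of_tendsto htend (eventually_nhdsWithin_of_forall fun r hr => h _ (sub_lt_self c hr))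

lemma integral_comp_fst_of_map_eq {μ : Measure ℝ} {π : Measure (ℝ × ℝ)}
    (hπμ : π.map Prod.fst = μ) {g : ℝ → ℝ} (hg : AEStronglyMeasurable g μ) :
    ∫ p, g p.1 ∂π = ∫ x, g x ∂μ := by
  subst hπμ
  exact (integral_map measurable_fst.aemeasurable hg).symm

lemma integrable_comp_fst_of_map_eq {μ : Measure ℝ} {π : Measure (ℝ × ℝ)}
    (hπμ : π.map Prod.fst = μ) {g : ℝ → ℝ} (hg : Integrable g μ) :
    Integrable (fun p => g p.1) π := by
  subst hπμ
  exact hg.comp_measurable measurable_fst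

section Rogers

variable {μ : Measure ℝ} {π : Measure (ℝ × ℝ)} [IsFiniteMeasure μ] [IsFiniteMeasure π]

lemma measure_snd_ge_le_measure_Ici (hπ : RogersAdmissible μ π)
    (hμ₁ : Integrable (fun x => x) μ) {t w : ℝ} (ht : 0 ≤ t) (hw : barycenter μ w < t) :
    π {p | t ≤ p.2} ≤ μ (Ici w) := by
  obtain ⟨hint, -, -, hcond, hmap⟩ := hπ
  set S := {p : ℝ × ℝ | t ≤ p.2}
  have hS : MeasurableSet S := measurable_snd measurableSet_Ici
  have hpos : Integrable (fun p : ℝ × ℝ => max (p.1 - w) 0) π :=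
    (hint.sub (integrable_const w)).pos_part
  have hmax : ∫ p, max (p.1 - w) 0 ∂π = (barycenter μ w - w) * μ.real (Ici w) := by
    rw [integral_comp_fst_of_map_eq hmap (g := fun x => max (x - w) 0) (by fun_prop),
      integral_max_sub_eq hμ₁]
  have hbound : ∫ p in S, p.1 ∂π ≤ w * π.real S + ∫ p, max (p.1 - w) 0 ∂π :=
    calc ∫ p in S, p.1 ∂π ≤ ∫ p in S, (w + max (p.1 - w) 0) ∂π :=
          setIntegral_mono_on hint.integrableOn ((integrable_const w).add hpos).integrableOn hS
            fun p _ => by linarith [le_max_left (p.1 - w) 0]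
      _ = w * π.real S + ∫ p in S, max (p.1 - w) 0 ∂π := by
          rw [integral_add (integrable_const w).integrableOn hpos.integrableOn, setIntegral_const,
            smul_eq_mul, mul_comm]
      _ ≤ w * π.real S + ∫ p, max (p.1 - w) 0 ∂π := add_le_add le_rfl
          (setIntegral_le_integral hpos (Filter.Eventually.of_forall fun _ => le_max_right _ _))
  have hmul : (t - w) * π.real S ≤ (t - w) * μ.real (Ici w) := by
    have hβ := mul_le_mul_of_nonneg_right (sub_le_sub_right hw.le w)
      (measureReal_nonneg (μ := μ) (s := Ici w))
    have : t * π.real S ≤ ∫ p in S, p.1 ∂π := hcond t ht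
    linarith
  exact (ENNReal.toReal_le_toReal (measure_ne_top _ _) (measure_ne_top _ _)).1
    (le_of_mul_le_mul_left hmul (sub_pos.2 ((le_barycenter hμ₁ w).trans_lt hw)))

lemma measure_snd_ge_le_measure_barycenter_ge [NeZero μ] [NullSingletonClass μ] (hμ : Centred μ)
    (hπ : RogersAdmissible μ π) (t : ℝ) :
    π {p | t ≤ p.2} ≤ μ {x | t ≤ barycenter μ x} := by
  rcases le_or_gt t 0 with ht | ht
  · have huniv : {x | t ≤ barycenter μ x} = univ :=
      eq_univ_of_forall fun x => ht.trans (barycenter_nonneg hμ x)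
    rw [huniv, ← hπ.2.2.2.2, Measure.map_apply measurable_fst MeasurableSet.univ, preimage_univ]
    exact measure_mono (subset_univ _)
  have hc : ∀ w < invBarycenter μ t, π {p | t ≤ p.2} ≤ μ (Ici w) := fun w hw =>
    measure_snd_ge_le_measure_Ici hπ hμ.1 ht.le
      (lt_of_not_ge fun h => hw.not_ge (invBarycenter_le hμ ht h))
  calc π {p | t ≤ p.2} ≤ μ (Ici (invBarycenter μ t)) := le_measure_Ici_of_forall_lt hc
    _ = μ (Ioi (invBarycenter μ t)) := (measure_congr Ioi_ae_eq_Ici).symm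
    _ ≤ μ {x | t ≤ barycenter μ x} := measure_mono fun x hx => by
        obtain ⟨a, ha, hax⟩ := exists_lt_of_csInf_lt ⟨t, le_barycenter hμ.1 t⟩ hx
        exact ha.trans (monotone_barycenter hμ.1 hax.le)

end Rogers

section StochasticOrder

variable {α : Type*} [MeasurableSpace α] {π : Measure α}

lemma measure_sdiff_le_measure_sdiff [IsFiniteMeasure π] {s t : Set α} (hs : MeasurableSet s)
    (ht : MeasurableSet t) (h : π s ≤ π t) : π (s \ t) ≤ π (t \ s) := by
  rw [← measure_inter_add_sdiff s ht, ← measure_inter_add_sdiff t hs, inter_comm] at h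
  exact (ENNReal.add_le_add_iff_left (measure_ne_top π _)).1 h

lemma lintegral_measure_Ioc_eq [SFinite π] {Λ : Measure ℝ} [SFinite Λ] {f g : α → ℝ}
    (hf : Measurable f) (hg : Measurable g) :
    ∫⁻ p, Λ (Ioc (f p) (g p)) ∂π = ∫⁻ t, π ({p | t ≤ g p} \ {p | t ≤ f p}) ∂Λ := by
  set C := {q : α × ℝ | f q.1 < q.2 ∧ q.2 ≤ g q.1}
  have hC : MeasurableSet C := (measurableSet_lt (hf.comp measurable_fst) measurable_snd).inter
    (measurableSet_le measurable_snd (hg.comp measurable_fst))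
  calc ∫⁻ p, Λ (Ioc (f p) (g p)) ∂π = π.prod Λ C := (Measure.prod_apply hC).symm
    _ = ∫⁻ t, π ((fun p => (p, t)) ⁻¹' C) ∂Λ := Measure.prod_apply_symm hC
    _ = ∫⁻ t, π ({p | t ≤ g p} \ {p | t ≤ f p}) ∂Λ := by
      congr with t
      congr 1 with p
      simp [C, and_comm]

variable [IsFiniteMeasure π] {f g : α → ℝ} (hf : Measurable f) (hg : Measurable g)
  (h : ∀ t, π {p | t ≤ g p} ≤ π {p | t ≤ f p})
include hf hg h

lemma lintegral_measure_Ioc_le (Λ : Measure ℝ) [SFinite Λ] :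
    ∫⁻ p, Λ (Ioc (f p) (g p)) ∂π ≤ ∫⁻ p, Λ (Ioc (g p) (f p)) ∂π := by
  rw [lintegral_measure_Ioc_eq hf hg, lintegral_measure_Ioc_eq hg hf]
  exact lintegral_mono fun t => measure_sdiff_le_measure_sdiff
    (hg measurableSet_Ici) (hf measurableSet_Ici) (h t)

lemma integral_nonpos_of_ae_le_sub {Φ : ℝ → ℝ} (hΦ : Monotone Φ)
    (hΦc : ∀ t, ContinuousWithinAt Φ (Ici t) t) {H : α → ℝ} (hH : Integrable H π)
    (hle : ∀ᵐ p ∂π, H p ≤ Φ (g p) - Φ (f p)) : ∫ p, H p ∂π ≤ 0 := by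
  let Λ := (StieltjesFunction.mk Φ hΦ hΦc).measure
  have hΛ (a b : ℝ) : Λ (Ioc a b) = ENNReal.ofReal (Φ b - Φ a) :=
    StieltjesFunction.measure_Ioc _ a b
  have hpos : ∫⁻ p, ENNReal.ofReal (H p) ∂π ≤ ∫⁻ p, Λ (Ioc (f p) (g p)) ∂π :=
    lintegral_mono_ae <| hle.mono fun p hp => by rw [hΛ]; exact ENNReal.ofReal_le_ofReal hp
  have hneg : ∫⁻ p, Λ (Ioc (g p) (f p)) ∂π ≤ ∫⁻ p, ENNReal.ofReal (-H p) ∂π :=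
    lintegral_mono_ae <| hle.mono fun p hp => by
      rw [hΛ]
      exact ENNReal.ofReal_le_ofReal (by linarith)
  rw [integral_eq_lintegral_pos_part_sub_lintegral_neg_part hH, sub_nonpos]
  exact ENNReal.toReal_mono hH.neg.lintegral_lt_top.ne
    (hpos.trans ((lintegral_measure_Ioc_le hf hg h Λ).trans hneg))

end StochasticOrder

/-- Azéma–Yor optimality for upper semicontinuous strictly supermodular
functions increasing in the running maximum. -/
theorem azemaYor_optimal_usc (μ : Measure ℝ) [IsProbabilityMeasure μ] [NullSingletonClass μ]
    (hμ : Centred μ)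
    (F : ℝ × ℝ → ℝ) (hFusc : UpperSemicontinuous F) (hFsm : StrictlySupermodular F)
    (hinc : ∀ w : ℝ, StrictMono (fun s : ℝ => F (w, s)))
    (hint : Integrable (fun w : ℝ => F (w, barycenter μ w)) μ)
    (π : Measure (ℝ × ℝ)) [IsProbabilityMeasure π]
    (hπ : RogersAdmissible μ π) (hFπ : Integrable F π) :
    (∫ p, F p ∂π) ≤ ∫ w, F (w, barycenter μ w) ∂μ := by
  have hF := hFsm.supermodular
  have hmono w := (hinc w).monotone
  have hFrc w t : ContinuousWithinAt (fun s => F (w, s)) (Ici t) t :=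
    (hmono w).continuousWithinAt_Ici
      ((hFusc.comp (continuous_const.prodMk continuous_id)).upperSemicontinuousWithinAt _ _)
  have hb := monotoneOn_invBarycenter hμ
  have hβ : Measurable (barycenter μ) := (monotone_barycenter hμ.1).measurable
  have hG : Measurable fun x => F (x, barycenter μ x) :=
    hFusc.measurable.comp (measurable_id.prodMk hβ)
  have ⟨_, _, hπM, _, hmap⟩ := hπ
  have hintπ := integrable_comp_fst_of_map_eq hmap hint
  rw [← integral_comp_fst_of_map_eq hmap hG.aestronglyMeasurable, ← sub_nonpos,
    ← integral_sub hFπ hintπ]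
  refine integral_nonpos_of_ae_le_sub (hβ.comp measurable_fst) measurable_snd ?_
    (monotone_potential hF hb hmono) (continuousWithinAt_potential hF hb hmono hFrc)
    (hFπ.sub hintπ) ?_
  · intro t
    have h := Measure.map_apply (μ := π) measurable_fst (hβ (measurableSet_Ici (a := t)))
    rw [hmap] at h
    exact (measure_snd_ge_le_measure_barycenter_ge hμ hπ t).trans_eq h
  · filter_upwards [mem_ae_iff.2 hπM] with p hp
    exact sub_le_potential_invBarycenter_sub hμ hF hmono hFrc hp.1
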